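/- arXiv:2504.19741 — 9 statements merged into one kernel-verified Lean document; each statement's English description precedes it below -/
import Mathlib

section
/- The function h : [0,∞) → ℝ defined by h(c) = 2∫₀^c e^{t²/2} dt − c·e^{c²/2} has exactly one root in (0,∞); moreover this unique positive root lies in the open interval (1,2). -/
/-!
`h' c = (1 - c²) e^{c²/2}`, so `h` increases strictly on `[0, 1]` from `h 0 = 0` and decreases
strictly on `[1, ∞)`. Hence `h` has no zero in `(0, 1]` and at most one in `[1, ∞)`; since
`h 2 < 0` (bound `e^{t²/2} ≤ e^t` on `[0, 2]`), that zero exists and lies in `(1, 2)`.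
-/

open Real Set

theorem exists_unique_zero_of_strictMonoOn_of_strictAntiOn {f : ℝ → ℝ} {a b d : ℝ}
    (hf : Continuous f) (hab : a < b) (hbd : b < d) (hmono : StrictMonoOn f (Icc a b))
    (hanti : StrictAntiOn f (Ici b)) (ha : f a = 0) (hd : f d < 0) :
    ∃ C, a < C ∧ f C = 0 ∧ (∀ c, a < c → f c = 0 → c = C) ∧ b < C ∧ C < d := by
  have hb : 0 < f b := ha ▸ hmono (left_mem_Icc.2 hab.le) (right_mem_Icc.2 hab.le) hab
  obtain ⟨C, ⟨hbC, hCd⟩, hC⟩ := intermediate_value_Ioo' hbd.le hf.continuousOn ⟨hd, hb⟩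
  refine ⟨C, hab.trans hbC, hC, fun c hac hc => ?_, hbC, hCd⟩
  have hbc : b < c := by
    by_contra! hcb
    exact (hmono (left_mem_Icc.2 hab.le) ⟨hac.le, hcb⟩ hac).ne (ha.trans hc.symm)
  exact hanti.injOn (mem_Ici.2 hbc.le) (mem_Ici.2 hbC.le) (hc.trans hC.symm)

noncomputable def integralGap (c : ℝ) : ℝ :=
  2 * (∫ t in (0:ℝ)..c, exp (t ^ 2 / 2)) - c * exp (c ^ 2 / 2)

theorem hasDerivAt_integralGap (c : ℝ) :
    HasDerivAt integralGap ((1 - c ^ 2) * exp (c ^ 2 / 2)) c := by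
  have hint : HasDerivAt (fun c => ∫ t in (0:ℝ)..c, exp (t ^ 2 / 2)) (exp (c ^ 2 / 2)) c :=
    ((by fun_prop : Continuous fun t : ℝ => exp (t ^ 2 / 2)).integral_hasStrictDerivAt 0 c).hasDerivAt
  have hexp : HasDerivAt (fun c : ℝ => exp (c ^ 2 / 2)) (exp (c ^ 2 / 2) * c) c := by
    simpa using ((hasDerivAt_pow 2 c).div_const 2).exp
  refine ((hint.const_mul 2).sub ((hasDerivAt_id' c).mul hexp)).congr_deriv ?_
  ring

theorem continuous_integralGap : Continuous integralGap :=
  continuous_iff_continuousAt.2 fun c => (hasDerivAt_integralGap c).continuousAt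

theorem integralGap_zero : integralGap 0 = 0 := by
  simp [integralGap]

theorem strictMonoOn_integralGap : StrictMonoOn integralGap (Icc 0 1) := by
  refine strictMonoOn_of_deriv_pos (convex_Icc 0 1) continuous_integralGap.continuousOn
    fun x hx => ?_
  rw [interior_Icc] at hx
  rw [(hasDerivAt_integralGap x).deriv]
  exact mul_pos (by nlinarith [hx.1, hx.2]) (exp_pos _)

theorem strictAntiOn_integralGap : StrictAntiOn integralGap (Ici 1) := by
  refine strictAntiOn_of_deriv_neg (convex_Ici 1) continuous_integralGap.continuousOn
    fun x hx => ?_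
  rw [interior_Ici] at hx
  rw [(hasDerivAt_integralGap x).deriv]
  exact mul_neg_of_neg_of_pos (by nlinarith [mem_Ioi.1 hx]) (exp_pos _)

theorem integral_exp_half_sq_zero_two_le : ∫ t in (0:ℝ)..2, exp (t ^ 2 / 2) ≤ exp 2 - 1 := by
  calc ∫ t in (0:ℝ)..2, exp (t ^ 2 / 2)
      ≤ ∫ t in (0:ℝ)..2, exp t := by
        refine intervalIntegral.integral_mono_on (by norm_num)
          ((by fun_prop : Continuous fun t : ℝ => exp (t ^ 2 / 2)).intervalIntegrable 0 2)
          (continuous_exp.intervalIntegrable 0 2)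
          fun t ht => exp_le_exp.2 ?_
        nlinarith [ht.1, ht.2]
    _ = exp 2 - 1 := by simp [integral_exp]

theorem integralGap_two_neg : integralGap 2 < 0 := by
  have h22 : (2:ℝ) ^ 2 / 2 = 2 := by norm_num
  rw [integralGap, h22]
  linarith [integral_exp_half_sq_zero_two_le]

/-- The function `h(c) = 2∫₀^c e^{t²/2} dt − c·e^{c²/2}` has exactly one root in `(0,∞)`,
and this unique positive root lies in `(1,2)`. -/
theorem stmt_0 (h : ℝ → ℝ)
    (hh : ∀ c : ℝ, h c = 2 * (∫ t in (0:ℝ)..c, Real.exp (t ^ 2 / 2)) - c * Real.exp (c ^ 2 / 2)) :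
    ∃ C : ℝ, 0 < C ∧ h C = 0 ∧ (∀ c : ℝ, 0 < c → h c = 0 → c = C) ∧ 1 < C ∧ C < 2 := by
  obtain rfl : h = integralGap := funext hh
  exact exists_unique_zero_of_strictMonoOn_of_strictAntiOn continuous_integralGap one_pos
    one_lt_two strictMonoOn_integralGap strictAntiOn_integralGap integralGap_zero
    integralGap_two_neg
end

section
/- For every y > 0, the strict inequality (y(2 − y²)/2)·e^{y²/2} < ∫₀^y e^{t²/2} dt holds. -/
open Real

/-! Put `G y = y(2 − y²)/2 · e^{y²/2}`. Then `G' = e^{t²/2} − (t² + t⁴)/2 · e^{t²/2}` and `G 0 = 0`,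
so the difference `∫₀^y e^{t²/2} dt − G y` equals `∫₀^y (t² + t⁴)/2 · e^{t²/2} dt`, whose integrand
is positive on `(0, y]`. -/

theorem hasDerivAt_mul_exp_sq_half (t : ℝ) :
    HasDerivAt (fun t => t * (2 - t ^ 2) / 2 * exp (t ^ 2 / 2))
      (exp (t ^ 2 / 2) - (t ^ 2 + t ^ 4) / 2 * exp (t ^ 2 / 2)) t := by
  have hpoly : HasDerivAt (fun t : ℝ => t * (2 - t ^ 2) / 2) ((2 - 3 * t ^ 2) / 2) t :=
    (((hasDerivAt_id' t).mul ((hasDerivAt_pow 2 t).const_sub 2)).div_const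
      2).congr_deriv (by ring)
  have hexp : HasDerivAt (fun t : ℝ => exp (t ^ 2 / 2)) (exp (t ^ 2 / 2) * t) t :=
    ((hasDerivAt_pow 2 t).div_const 2).exp.congr_deriv (by ring)
  exact (hpoly.mul hexp).congr_deriv (by ring)

theorem integral_exp_sq_half_sub_eq (y : ℝ) :
    (∫ t in (0:ℝ)..y, exp (t ^ 2 / 2)) - y * (2 - y ^ 2) / 2 * exp (y ^ 2 / 2) =
      ∫ t in (0:ℝ)..y, (t ^ 2 + t ^ 4) / 2 * exp (t ^ 2 / 2) := by
  have hexp : Continuous fun t : ℝ => exp (t ^ 2 / 2) := by fun_prop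
  have hweighted : Continuous fun t : ℝ => (t ^ 2 + t ^ 4) / 2 * exp (t ^ 2 / 2) := by fun_prop
  have hftc := intervalIntegral.integral_eq_sub_of_hasDerivAt
    (fun t _ => hasDerivAt_mul_exp_sq_half t) ((hexp.sub hweighted).intervalIntegrable 0 y)
  rw [intervalIntegral.integral_sub (hexp.intervalIntegrable 0 y)
    (hweighted.intervalIntegrable 0 y)] at hftc
  simp only [ne_eq, OfNat.ofNat_ne_zero, not_false_eq_true, zero_pow, zero_mul, zero_div, sub_zero]
    at hftc
  linarith

theorem integral_sq_add_pow_four_mul_exp_pos {y : ℝ} (hy : 0 < y) :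
    0 < ∫ t in (0:ℝ)..y, (t ^ 2 + t ^ 4) / 2 * exp (t ^ 2 / 2) := by
  refine intervalIntegral.intervalIntegral_pos_of_pos_on
    (Continuous.intervalIntegrable (by fun_prop) 0 y) (fun t ht => ?_) hy
  have ht₀ : 0 < t := ht.1
  positivity

/-- For every `y > 0`, `(y(2 − y²)/2)·e^{y²/2} < ∫₀^y e^{t²/2} dt`. -/
theorem stmt_2 :
    ∀ y : ℝ, 0 < y →
      y * (2 - y ^ 2) / 2 * Real.exp (y ^ 2 / 2) < ∫ t in (0:ℝ)..y, Real.exp (t ^ 2 / 2) := by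
  intro y hy
  linarith [integral_exp_sq_half_sub_eq y, integral_sq_add_pow_four_mul_exp_pos hy]
end

section
/- Let C be the unique root in (0,∞) of h(c) = 2∫₀^c e^{t²/2} dt − c·e^{c²/2}. Then the function f : (0,∞) → ℝ defined by f(y) = (1/y)∫₀^y e^{t²/2} dt satisfies f''(y) > 0 for all y ∈ (0,C]; in particular f is strictly convex on (0,C]. -/
/-!
Write `F y = ∫₀^y e^{t²/2} dt`. Differentiating `f = F / y` twice gives `f'' y = N y / y³` with
`N y = (y³ - 2y) e^{y²/2} + 2 F y`. Since `N 0 = 0` and `N' y = y² (y² + 1) e^{y²/2} > 0`, the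
numerator is positive for `y > 0`, so `f'' > 0` on all of `(0, ∞)`.
-/

open Real Set Filter

noncomputable def expHalfSqIntegral (y : ℝ) : ℝ := ∫ t in (0:ℝ)..y, exp (t ^ 2 / 2)

noncomputable def convexityNumerator (y : ℝ) : ℝ :=
  (y ^ 3 - 2 * y) * exp (y ^ 2 / 2) + 2 * expHalfSqIntegral y

lemma hasDerivAt_exp_sq_half (y : ℝ) :
    HasDerivAt (fun t : ℝ => exp (t ^ 2 / 2)) (exp (y ^ 2 / 2) * y) y := by
  refine ((hasDerivAt_pow 2 y).div_const 2).exp.congr_deriv ?_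
  ring

lemma hasDerivAt_expHalfSqIntegral (y : ℝ) :
    HasDerivAt expHalfSqIntegral (exp (y ^ 2 / 2)) y :=
  ((by fun_prop : Continuous fun t : ℝ => exp (t ^ 2 / 2)).integral_hasStrictDerivAt 0 y).hasDerivAt

lemma hasDerivAt_convexityNumerator (y : ℝ) :
    HasDerivAt convexityNumerator (y ^ 2 * (y ^ 2 + 1) * exp (y ^ 2 / 2)) y := by
  refine ((((hasDerivAt_pow 3 y).sub ((hasDerivAt_id y).const_mul 2)).mul
    (hasDerivAt_exp_sq_half y)).add ((hasDerivAt_expHalfSqIntegral y).const_mul 2)).congr_deriv ?_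
  simp only [Pi.sub_apply, id_eq]
  ring

lemma convexityNumerator_strictMonoOn : StrictMonoOn convexityNumerator (Ici 0) := by
  refine strictMonoOn_of_deriv_pos (convex_Ici 0)
    (fun x _ => (hasDerivAt_convexityNumerator x).continuousAt.continuousWithinAt) ?_
  intro x hx
  rw [interior_Ici] at hx
  rw [(hasDerivAt_convexityNumerator x).deriv]
  have hx : 0 < x := hx
  positivity

lemma convexityNumerator_pos {y : ℝ} (hy : 0 < y) : 0 < convexityNumerator y := by
  have h0 : convexityNumerator 0 = 0 := by simp [convexityNumerator, expHalfSqIntegral]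
  simpa [h0] using convexityNumerator_strictMonoOn self_mem_Ici hy.le hy

lemma hasDerivAt_expHalfSqIntegral_div {y : ℝ} (hy : y ≠ 0) :
    HasDerivAt (fun y => expHalfSqIntegral y / y)
      ((y * exp (y ^ 2 / 2) - expHalfSqIntegral y) / y ^ 2) y := by
  refine ((hasDerivAt_expHalfSqIntegral y).div (hasDerivAt_id y) hy).congr_deriv ?_
  simp only [id_eq]
  ring

lemma hasDerivAt_expHalfSqIntegral_div_deriv {y : ℝ} (hy : y ≠ 0) :
    HasDerivAt (fun y => (y * exp (y ^ 2 / 2) - expHalfSqIntegral y) / y ^ 2)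
      (convexityNumerator y / y ^ 3) y := by
  have hnum := ((hasDerivAt_id y).mul (hasDerivAt_exp_sq_half y)).sub
    (hasDerivAt_expHalfSqIntegral y)
  refine (hnum.div (hasDerivAt_pow 2 y) (pow_ne_zero 2 hy)).congr_deriv ?_
  simp only [Pi.sub_apply, Pi.mul_apply, id_eq, convexityNumerator]
  field_simp
  ring

lemma deriv_deriv_expHalfSqIntegral_div {y : ℝ} (hy : y ≠ 0) :
    deriv (deriv fun y => expHalfSqIntegral y / y) y = convexityNumerator y / y ^ 3 := by
  have hderiv : deriv (fun y => expHalfSqIntegral y / y) =ᶠ[nhds y]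
      fun y => (y * exp (y ^ 2 / 2) - expHalfSqIntegral y) / y ^ 2 := by
    filter_upwards [eventually_ne_nhds hy] with x hx
      using (hasDerivAt_expHalfSqIntegral_div hx).deriv
  rw [hderiv.deriv_eq, (hasDerivAt_expHalfSqIntegral_div_deriv hy).deriv]

lemma deriv_deriv_expHalfSqIntegral_div_pos {y : ℝ} (hy : 0 < y) :
    0 < deriv (deriv fun y => expHalfSqIntegral y / y) y := by
  rw [deriv_deriv_expHalfSqIntegral_div hy.ne']
  exact div_pos (convexityNumerator_pos hy) (pow_pos hy 3)

lemma strictConvexOn_expHalfSqIntegral_div :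
    StrictConvexOn ℝ (Ioi 0) fun y => expHalfSqIntegral y / y :=
  strictConvexOn_of_deriv2_pos' (convex_Ioi 0)
    (fun _ hx => (hasDerivAt_expHalfSqIntegral_div (ne_of_gt hx)).continuousAt.continuousWithinAt)
    (fun _ hx => deriv_deriv_expHalfSqIntegral_div_pos hx)

theorem stmt_3_general (C : ℝ)
    (f : ℝ → ℝ)
    (hf : ∀ y : ℝ, f y = (1 / y) * ∫ t in (0:ℝ)..y, Real.exp (t ^ 2 / 2)) :
    (∀ y ∈ Set.Ioc (0:ℝ) C, 0 < deriv (deriv f) y) ∧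
      StrictConvexOn ℝ (Set.Ioc (0:ℝ) C) f := by
  obtain rfl : f = fun y => expHalfSqIntegral y / y := by
    funext y
    rw [hf y, one_div_mul_eq_div, expHalfSqIntegral]
  exact ⟨fun y hy => deriv_deriv_expHalfSqIntegral_div_pos hy.1,
    strictConvexOn_expHalfSqIntegral_div.subset Ioc_subset_Ioi_self (convex_Ioc 0 C)⟩

/-- Let `C` be the unique positive root of `h(c) = 2∫₀^c e^{t²/2} dt − c·e^{c²/2}`.
Then `f(y) = (1/y)∫₀^y e^{t²/2} dt` satisfies `f''(y) > 0` on `(0,C]`; in particular `f`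
is strictly convex on `(0,C]`. -/
theorem stmt_3 (C : ℝ) (hCpos : 0 < C)
    (hCroot : 2 * (∫ t in (0:ℝ)..C, Real.exp (t ^ 2 / 2)) - C * Real.exp (C ^ 2 / 2) = 0)
    (hCuniq : ∀ c : ℝ, 0 < c →
      2 * (∫ t in (0:ℝ)..c, Real.exp (t ^ 2 / 2)) - c * Real.exp (c ^ 2 / 2) = 0 → c = C)
    (f : ℝ → ℝ)
    (hf : ∀ y : ℝ, f y = (1 / y) * ∫ t in (0:ℝ)..y, Real.exp (t ^ 2 / 2)) :
    (∀ y ∈ Set.Ioc (0:ℝ) C, 0 < deriv (deriv f) y) ∧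
      StrictConvexOn ℝ (Set.Ioc (0:ℝ) C) f :=
  stmt_3_general C f hf
end

section
/- Let (a_j)_{j≥0} and (b_j)_{j≥0} be real sequences with a_j > 0 for all j, b_{j+1} ≥ b_j for all j, b_0 < 0, and b_J > 0 for some J < ∞. Suppose the power series h(y) = Σ_{j=0}^∞ a_j·b_j·y^j converges for every y ≥ 0. Then h has a unique root y* in (0,∞), and for y ≥ 0 one has h(y) < 0 if and only if y ∈ [0, y*). -/
/-!
Put `c j = a j * b j` and let `m` be the first index with `b m > 0`, so that `c j ≤ 0` for
`j < m`, `c j > 0` for `j ≥ m` and `m ≥ 1`. Then `h y / y ^ m = Σ c j * y ^ (j - m)` is strictly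
increasing on `(0, ∞)`: every term is nondecreasing, the terms with `j < m` because their
coefficient and exponent are both negative, and the `j = 0` term strictly. As
`h 0 = c 0 < 0`, while `h y ≥ Σ_{j ≤ m} c j * y ^ j > 0` for large `y`, and `h` is continuous
(its power series has infinite radius), `h` has a positive root, and the monotonicity of
`h y / y ^ m` shows that this root is unique and that `h` is negative exactly before it.
-/

open Filter Set Asymptotics

lemma mul_pow_div_pow_le {c x z : ℝ} {j m : ℕ} (hx : 0 < x) (hxz : x ≤ z)
    (hneg : j < m → c ≤ 0) (hpos : m ≤ j → 0 ≤ c) :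
    c * x ^ j / x ^ m ≤ c * z ^ j / z ^ m := by
  have hz := hx.trans_le hxz
  rcases lt_or_ge j m with hj | hj
  · obtain ⟨k, rfl⟩ := Nat.exists_eq_add_of_lt hj
    have key : c * (x ^ (k + 1))⁻¹ ≤ c * (z ^ (k + 1))⁻¹ :=
      mul_le_mul_of_nonpos_left (inv_anti₀ (by positivity) (pow_le_pow_left₀ hx.le hxz _))
        (hneg hj)
    convert key using 1 <;> field_simp <;> ring
  · obtain ⟨k, rfl⟩ := Nat.exists_eq_add_of_le hj
    have key : c * x ^ k ≤ c * z ^ k :=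
      mul_le_mul_of_nonneg_left (pow_le_pow_left₀ hx.le hxz _) (hpos hj)
    convert key using 1 <;> field_simp <;> ring

lemma tsum_mul_zero_pow (c : ℕ → ℝ) : ∑' j, c j * (0 : ℝ) ^ j = c 0 := by
  rw [tsum_eq_single 0 fun j hj => by simp [hj]]
  simp

section SignChange

variable {c : ℕ → ℝ} {m : ℕ}

lemma continuous_tsum_mul_pow_of_summable
    (hs : ∀ y : ℝ, 0 ≤ y → Summable (fun j => c j * y ^ j)) :
    Continuous (fun y : ℝ => ∑' j, c j * y ^ j) := by
  set p := FormalMultilinearSeries.ofScalars ℝ c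
  have hrad : p.radius = ⊤ := ENNReal.eq_top_of_forall_nnreal_le fun r =>
    p.le_radius_of_tendsto (l := 0) <| by
      simpa [p, FormalMultilinearSeries.ofScalars_norm, abs_mul] using
        (hs r r.2).tendsto_atTop_zero.norm
  have hp := (p.hasFPowerSeriesOnBall (hrad ▸ ENNReal.zero_lt_top)).continuousOn
  rw [hrad, Metric.eball_top, continuousOn_univ] at hp
  rwa [← FormalMultilinearSeries.ofScalarsSum, FormalMultilinearSeries.ofScalarsSum_eq_tsum] at hp

lemma strictMonoOn_tsum_mul_pow_div_pow
    (hs : ∀ y : ℝ, 0 ≤ y → Summable (fun j => c j * y ^ j)) (hc0 : c 0 < 0)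
    (hneg : ∀ j < m, c j ≤ 0) (hpos : ∀ j, m ≤ j → 0 ≤ c j) :
    StrictMonoOn (fun y : ℝ => (∑' j, c j * y ^ j) / y ^ m) (Ioi 0) := by
  intro x (hx : 0 < x) z (hz : 0 < z) hxz
  have hm : m ≠ 0 := by rintro rfl; exact (hpos 0 le_rfl).not_gt hc0
  simp only [← tsum_div_const]
  refine Summable.tsum_lt_tsum (i := 0)
    (fun j => mul_pow_div_pow_le hx hxz.le (hneg j) (hpos j)) ?_
    ((hs x hx.le).div_const _) ((hs z hz.le).div_const _)
  have := div_lt_div_of_pos_left (neg_pos.mpr hc0) (pow_pos hx m) (pow_lt_pow_left₀ hxz hx.le hm)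
  simp only [pow_zero, mul_one, neg_div] at this ⊢
  linarith

lemma eventually_pos_tsum_mul_pow
    (hs : ∀ y : ℝ, 0 ≤ y → Summable (fun j => c j * y ^ j))
    (hpos : ∀ j, m ≤ j → 0 ≤ c j) (hm : 0 < c m) :
    ∀ᶠ y in atTop, 0 < ∑' j, c j * y ^ j := by
  have hlow : (fun y : ℝ => ∑ j ∈ Finset.range m, c j * y ^ j) =o[atTop] (· ^ m) :=
    IsLittleO.fun_sum fun j hj =>
      (isLittleO_pow_pow_atTop_of_lt (Finset.mem_range.mp hj)).const_mul_left (c j)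
  filter_upwards [hlow.def (half_pos hm), eventually_gt_atTop 0] with y hy hy0
  have hpart : ∑ j ∈ Finset.range (m + 1), c j * y ^ j ≤ ∑' j, c j * y ^ j :=
    (hs y hy0.le).sum_le_tsum _ fun j hj =>
      mul_nonneg (hpos j (by simp at hj; omega)) (pow_nonneg hy0.le j)
  rw [Finset.sum_range_succ] at hpart
  rw [Real.norm_eq_abs, Real.norm_of_nonneg (pow_nonneg hy0.le m)] at hy
  linarith [neg_abs_le (∑ j ∈ Finset.range m, c j * y ^ j), mul_pos hm (pow_pos hy0 m)]

theorem exists_pos_root_tsum_mul_pow_of_sign_change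
    (hs : ∀ y : ℝ, 0 ≤ y → Summable (fun j => c j * y ^ j)) (hc0 : c 0 < 0)
    (hneg : ∀ j < m, c j ≤ 0) (hpos : ∀ j, m ≤ j → 0 ≤ c j) (hm : 0 < c m) :
    ∃ ystar : ℝ, 0 < ystar ∧ ∑' j, c j * ystar ^ j = 0 ∧
      (∀ y : ℝ, 0 < y → ∑' j, c j * y ^ j = 0 → y = ystar) ∧
      ∀ y : ℝ, 0 ≤ y → (∑' j, c j * y ^ j < 0 ↔ y < ystar) := by
  obtain ⟨y₁, hfy₁, hy₁⟩ :=
    ((eventually_pos_tsum_mul_pow hs hpos hm).and (eventually_gt_atTop 0)).exists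
  obtain ⟨ystar, ⟨hystar, -⟩, hroot : ∑' j, c j * ystar ^ j = 0⟩ :=
    intermediate_value_Ioo hy₁.le (continuous_tsum_mul_pow_of_summable hs).continuousOn
      ⟨(tsum_mul_zero_pow c).symm ▸ hc0, hfy₁⟩
  have hmono := strictMonoOn_tsum_mul_pow_div_pow hs hc0 hneg hpos
  have hsign (y : ℝ) (hy : 0 < y) : ∑' j, c j * y ^ j < 0 ↔ y < ystar :=
    calc ∑' j, c j * y ^ j < 0
        ↔ (∑' j, c j * y ^ j) / y ^ m < (∑' j, c j * ystar ^ j) / ystar ^ m := by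
          rw [hroot, zero_div, div_lt_iff₀ (pow_pos hy m), zero_mul]
      _ ↔ y < ystar := hmono.lt_iff_lt hy hystar
  refine ⟨ystar, hystar, hroot, fun y hy hfy => hmono.injOn hy hystar ?_, fun y hy => ?_⟩
  · simp only [hfy, hroot, zero_div]
  · rcases hy.eq_or_lt with rfl | hy
    · simp [tsum_mul_zero_pow, hc0, hystar]
    · exact hsign y hy

end SignChange

/-- Let `(a_j)` and `(b_j)` be real sequences with `a_j > 0`, `b` nondecreasing, `b₀ < 0`
and `b_J > 0` for some `J`, and suppose the power series `h(y) = Σ a_j·b_j·y^j`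
converges for every `y ≥ 0`. Then `h` has a unique root `y*` in `(0,∞)` and, for `y ≥ 0`,
`h(y) < 0` if and only if `y < y*`. -/
theorem stmt_10 (a b : ℕ → ℝ)
    (ha : ∀ j, 0 < a j)
    (hb : ∀ j, b j ≤ b (j + 1))
    (hb0 : b 0 < 0)
    (hbJ : ∃ J : ℕ, 0 < b J)
    (hsum : ∀ y : ℝ, 0 ≤ y → Summable (fun j : ℕ => a j * b j * y ^ j))
    (h : ℝ → ℝ) (hh : ∀ y : ℝ, h y = ∑' j : ℕ, a j * b j * y ^ j) :
    ∃ ystar : ℝ, 0 < ystar ∧ h ystar = 0 ∧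
      (∀ y : ℝ, 0 < y → h y = 0 → y = ystar) ∧
      ∀ y : ℝ, 0 ≤ y → (h y < 0 ↔ y < ystar) := by
  obtain rfl : h = fun y => ∑' j, a j * b j * y ^ j := funext hh
  have hbm : 0 < b (Nat.find hbJ) := Nat.find_spec hbJ
  exact exists_pos_root_tsum_mul_pow_of_sign_change hsum (mul_neg_of_pos_of_neg (ha 0) hb0)
    (fun j hj => mul_nonpos_of_nonneg_of_nonpos (ha j).le (not_lt.mp (Nat.find_min hbJ hj)))
    (fun j hj => (mul_pos (ha j) (hbm.trans_le (monotone_nat_of_le_succ hb hj))).le)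
    (mul_pos (ha _) hbm)
end

section
/- Fix α > 0 and n > 0, let A_k = (Γ(α/2)/Γ(n/2)) · Γ(k + n/2) / (Γ(k + α/2) · 2^k · k!), and define F_{α,n}(z) = Σ_{k=0}^∞ (2k − n)·A_k·z^k for z ≥ 0. Then F_{α,n} has a unique positive root Z_{α,n} ∈ (0,∞), and F_{α,n}(z) < 0 for all z ∈ [0, Z_{α,n}). -/
/-!
With `c k = (2k - n) A_k`, the sign of `c k` is that of `k - n/2`, so every term of
`z^(-n/2) F(z) = ∑ c k z^(k - n/2)` is nondecreasing in `z > 0`, and the term `k = 0`, equal to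
`-n z^(-n/2)`, is strictly increasing. Hence `z^(-n/2) F` is strictly increasing on `(0, ∞)`,
which gives uniqueness of the positive root and negativity of `F` before it. Since `F 0 = -n`
and the terms with `k > n/2` grow without bound, the intermediate value theorem produces the
root. The ratio `A (k+1) / A k` tends to `0`, so the series converges everywhere.
-/

open Real

open Filter Set FormalMultilinearSeries Topology

/-- `∑ A_k z^k` is Kummer's function `M(n/2, α/2, z/2)`: `A_k = (n/2)_k / ((α/2)_k 2^k k!)`. -/
noncomputable def kummerCoeff (α n : ℝ) (k : ℕ) : ℝ :=
  Gamma (α / 2) / Gamma (n / 2) *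
    (Gamma ((k : ℝ) + n / 2) / (Gamma ((k : ℝ) + α / 2) * 2 ^ k * (k.factorial : ℝ)))

section KummerCoeff

variable {α n : ℝ}

theorem kummerCoeff_pos (hα : 0 < α) (hn : 0 < n) (k : ℕ) : 0 < kummerCoeff α n k := by
  unfold kummerCoeff
  have := Gamma_pos_of_pos (half_pos hα)
  have := Gamma_pos_of_pos (half_pos hn)
  have := Gamma_pos_of_pos (by positivity : 0 < (k : ℝ) + α / 2)
  have := Gamma_pos_of_pos (by positivity : 0 < (k : ℝ) + n / 2)
  positivity

theorem kummerCoeff_zero (hα : 0 < α) (hn : 0 < n) : kummerCoeff α n 0 = 1 := by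
  have := (Gamma_pos_of_pos (half_pos hα)).ne'
  have := (Gamma_pos_of_pos (half_pos hn)).ne'
  simp only [kummerCoeff, CharP.cast_eq_zero, zero_add, pow_zero, mul_one, Nat.factorial_zero,
    Nat.cast_one]
  field_simp

theorem kummerCoeff_succ_div (hα : 0 < α) (hn : 0 < n) (k : ℕ) :
    kummerCoeff α n (k + 1) / kummerCoeff α n k =
      ((k : ℝ) + n / 2) / (2 * ((k : ℝ) + 1) * ((k : ℝ) + α / 2)) := by
  have hka : 0 < (k : ℝ) + α / 2 := by positivity
  have hkn : 0 < (k : ℝ) + n / 2 := by positivity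
  have := (Gamma_pos_of_pos (half_pos hα)).ne'
  have := (Gamma_pos_of_pos (half_pos hn)).ne'
  have := (Gamma_pos_of_pos hka).ne'
  have := (Gamma_pos_of_pos hkn).ne'
  simp only [kummerCoeff, Nat.cast_succ, Nat.factorial_succ, Nat.cast_mul, pow_succ,
    add_right_comm _ (1 : ℝ), Gamma_add_one hka.ne', Gamma_add_one hkn.ne']
  field_simp

theorem tendsto_kummerCoeff_succ_div (hα : 0 < α) (hn : 0 < n) :
    Tendsto (fun k ↦ kummerCoeff α n (k + 1) / kummerCoeff α n k) atTop (𝓝 0) := by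
  have h₁ := tendsto_add_mul_div_add_mul_atTop_nhds (n / 2) 2 (1 : ℝ) two_ne_zero
  have h₂ : Tendsto (fun k : ℕ ↦ ((k : ℝ) + α / 2)⁻¹) atTop (𝓝 0) :=
    tendsto_inv_atTop_zero.comp (tendsto_atTop_add_const_right _ _ tendsto_natCast_atTop_atTop)
  convert h₁.mul h₂ using 1
  · ext k
    rw [kummerCoeff_succ_div hα hn, div_mul_eq_div_div, div_eq_mul_inv _ ((k : ℝ) + α / 2)]
    ring
  · simp

theorem radius_ofScalars_eq_top (hα : 0 < α) (hn : 0 < n) :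
    (ofScalars ℝ fun k ↦ (2 * (k : ℝ) - n) * kummerCoeff α n k).radius = ⊤ := by
  refine ofScalars_radius_eq_top_of_tendsto ℝ _ ?_ ?_
  · filter_upwards [eventually_gt_atTop ⌊n / 2⌋₊] with k hk
    have : n < 2 * k := by have := Nat.lt_of_floor_lt hk; linarith
    exact mul_ne_zero (by linarith) (kummerCoeff_pos hα hn k).ne'
  · have h := (tendsto_add_mul_div_add_mul_atTop_nhds (2 - n) (-n) (2 : ℝ) two_ne_zero).mul
      (tendsto_kummerCoeff_succ_div hα hn)
    rw [mul_zero] at h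
    convert h.norm using 1
    · ext k
      rw [← norm_div, Nat.succ_eq_add_one, mul_div_mul_comm]
      congr 3 <;> push_cast <;> ring
    · simp

end KummerCoeff

section EntireSeries

variable {c : ℕ → ℝ}

theorem summable_mul_pow_of_radius_eq_top (hc : (ofScalars ℝ c).radius = ⊤) (z : ℝ) :
    Summable fun k ↦ c k * z ^ k := by
  refine Summable.of_norm ?_
  simpa [ofScalars_apply_eq, mul_comm] using
    (ofScalars ℝ c).summable_norm_apply (x := z) (by simp [hc])

theorem continuous_tsum_mul_pow_of_radius_eq_top (hc : (ofScalars ℝ c).radius = ⊤) :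
    Continuous fun z : ℝ ↦ ∑' k, c k * z ^ k := by
  have h : Continuous (ofScalarsSum (E := ℝ) c) := by
    rw [← continuousOn_univ]
    simpa [hc, ofScalarsSum] using (ofScalars ℝ c).continuousOn
  simpa [ofScalarsSum_eq_tsum] using h

end EntireSeries

theorem mul_rpow_le_mul_rpow_of_nonneg_mul {a e x y : ℝ} (he : 0 ≤ a * e) (hx : 0 < x)
    (hxy : x ≤ y) : a * x ^ e ≤ a * y ^ e := by
  rcases lt_trichotomy a 0 with ha | rfl | ha
  · exact mul_le_mul_of_nonpos_left
      (rpow_le_rpow_of_nonpos hx hxy (nonpos_of_mul_nonneg_right he ha)) ha.le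
  · simp
  · exact mul_le_mul_of_nonneg_left
      (rpow_le_rpow hx.le hxy (nonneg_of_mul_nonneg_right he ha)) ha.le

section SignChange

variable {c : ℕ → ℝ} {p : ℝ}

theorem rpow_neg_mul_tsum_mul_pow {z : ℝ} (hz : 0 < z) :
    z ^ (-p) * ∑' k, c k * z ^ k = ∑' k, c k * z ^ ((k : ℝ) - p) := by
  rw [← tsum_mul_left]
  congr 1 with k
  rw [sub_eq_neg_add, rpow_add hz, rpow_natCast]
  ring

theorem mul_sub_le_rpow_neg_mul_tsum_sub (hs : ∀ z, Summable fun k ↦ c k * z ^ k)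
    (hsign : ∀ k : ℕ, 0 ≤ c k * (k - p)) {x y : ℝ} (hx : 0 < x) (hxy : x ≤ y) (j : ℕ) :
    c j * (y ^ ((j : ℝ) - p) - x ^ ((j : ℝ) - p)) ≤
      y ^ (-p) * ∑' k, c k * y ^ k - x ^ (-p) * ∑' k, c k * x ^ k := by
  have hy := hx.trans_le hxy
  have hs' : ∀ z, 0 < z → Summable fun k : ℕ ↦ c k * z ^ ((k : ℝ) - p) := fun z hz ↦
    ((hs z).mul_left (z ^ (-p))).congr fun k ↦ by
      rw [sub_eq_neg_add, rpow_add hz, rpow_natCast]; ring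
  rw [rpow_neg_mul_tsum_mul_pow hx, rpow_neg_mul_tsum_mul_pow hy,
    ← (hs' y hy).tsum_sub (hs' x hx), mul_sub]
  refine ((hs' y hy).sub (hs' x hx)).le_tsum j fun k _ ↦ ?_
  exact sub_nonneg.2 (mul_rpow_le_mul_rpow_of_nonneg_mul (hsign k) hx hxy)

theorem strictMonoOn_rpow_neg_mul_tsum (hs : ∀ z, Summable fun k ↦ c k * z ^ k)
    (hsign : ∀ k : ℕ, 0 ≤ c k * (k - p)) (hp : 0 < p) (hc₀ : c 0 ≠ 0) :
    StrictMonoOn (fun z ↦ z ^ (-p) * ∑' k, c k * z ^ k) (Ioi 0) := by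
  intro x hx y _ hxy
  have hc₀_neg : c 0 < 0 :=
    hc₀.lt_of_le (nonpos_of_mul_nonpos_left (by simpa using hsign 0) hp)
  have hterm : 0 < c 0 * (y ^ (-p) - x ^ (-p)) :=
    mul_pos_of_neg_of_neg hc₀_neg (sub_neg.2 (rpow_lt_rpow_of_neg hx hxy (neg_neg_of_pos hp)))
  have := mul_sub_le_rpow_neg_mul_tsum_sub hs hsign hx hxy.le 0
  simp only [CharP.cast_eq_zero, zero_sub] at this
  dsimp only
  linarith

theorem exists_pos_tsum_mul_pow (hs : ∀ z, Summable fun k ↦ c k * z ^ k)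
    (hsign : ∀ k : ℕ, 0 ≤ c k * (k - p)) {m : ℕ} (hm : p < m) (hcm : 0 < c m) :
    ∃ z, 0 < z ∧ 0 < ∑' k, c k * z ^ k := by
  set G : ℝ → ℝ := fun z ↦ z ^ (-p) * ∑' k, c k * z ^ k
  have hG : Tendsto G atTop atTop := by
    have hlin : Tendsto (fun y : ℝ ↦ G 1 + c m * (y ^ ((m : ℝ) - p) - 1)) atTop atTop :=
      tendsto_atTop_add_const_left _ _ <| (tendsto_atTop_add_const_right _ _
        (tendsto_rpow_atTop (sub_pos.2 hm))).const_mul_atTop hcm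
    refine tendsto_atTop_mono' _ ?_ hlin
    filter_upwards [eventually_ge_atTop 1] with y hy
    have := mul_sub_le_rpow_neg_mul_tsum_sub hs hsign one_pos hy m
    rw [one_rpow] at this
    linarith
  obtain ⟨z, hz, hGz⟩ := ((eventually_gt_atTop 0).and (hG.eventually_gt_atTop 0)).exists
  exact ⟨z, hz, pos_of_mul_pos_right hGz (rpow_pos_of_pos hz _).le⟩

end SignChange

theorem exists_unique_pos_root_of_strictMonoOn {f w : ℝ → ℝ} (hf : Continuous f) (hf₀ : f 0 < 0)
    (hpos : ∃ z, 0 < z ∧ 0 < f z) (hw : ∀ z, 0 < z → 0 < w z)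
    (hmono : StrictMonoOn (fun z ↦ w z * f z) (Ioi 0)) :
    ∃ Z : ℝ, 0 < Z ∧ f Z = 0 ∧ (∀ z : ℝ, 0 < z → f z = 0 → z = Z) ∧
      ∀ z : ℝ, 0 ≤ z → z < Z → f z < 0 := by
  obtain ⟨z₁, hz₁, hfz₁⟩ := hpos
  obtain ⟨Z, hZ, hfZ⟩ := intermediate_value_Icc hz₁.le hf.continuousOn
    (show (0 : ℝ) ∈ Icc (f 0) (f z₁) from ⟨hf₀.le, hfz₁.le⟩)
  have hZ_pos : 0 < Z := hZ.1.lt_of_ne (by rintro rfl; exact hf₀.ne hfZ)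
  refine ⟨Z, hZ_pos, hfZ, fun z hz hfz ↦ hmono.injOn hz hZ_pos (by simp [hfz, hfZ]), ?_⟩
  intro z hz hzZ
  rcases hz.eq_or_lt with rfl | hz
  · exact hf₀
  · have := hmono hz hZ_pos hzZ
    simp only [hfZ, mul_zero] at this
    exact neg_of_mul_neg_right this (hw z hz).le

/-- For `α > 0`, `n > 0` with `A_k = (Γ(α/2)/Γ(n/2))·Γ(k+n/2)/(Γ(k+α/2)·2^k·k!)`, the
function `F(z) = Σ (2k − n)·A_k·z^k` has a unique positive root `Z ∈ (0,∞)`, and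
`F(z) < 0` for all `z ∈ [0, Z)`. -/
theorem stmt_11 (α n : ℝ) (hα : 0 < α) (hn : 0 < n) (A : ℕ → ℝ)
    (hA : ∀ k : ℕ,
      A k = Real.Gamma (α / 2) / Real.Gamma (n / 2) *
        (Real.Gamma ((k : ℝ) + n / 2) /
          (Real.Gamma ((k : ℝ) + α / 2) * 2 ^ k * (Nat.factorial k : ℝ))))
    (F : ℝ → ℝ) (hF : ∀ z : ℝ, F z = ∑' k : ℕ, (2 * (k : ℝ) - n) * A k * z ^ k) :
    ∃ Z : ℝ, 0 < Z ∧ F Z = 0 ∧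
      (∀ z : ℝ, 0 < z → F z = 0 → z = Z) ∧
      ∀ z : ℝ, 0 ≤ z → z < Z → F z < 0 := by
  obtain rfl : A = kummerCoeff α n := funext hA
  set c : ℕ → ℝ := fun k ↦ (2 * (k : ℝ) - n) * kummerCoeff α n k
  obtain rfl : F = fun z ↦ ∑' k, c k * z ^ k := funext hF
  have hrad := radius_ofScalars_eq_top hα hn
  have hs := summable_mul_pow_of_radius_eq_top hrad
  have hsign : ∀ k : ℕ, 0 ≤ c k * (k - n / 2) := fun k ↦ by
    have := kummerCoeff_pos hα hn k
    calc 0 ≤ 2 * ((k : ℝ) - n / 2) ^ 2 * kummerCoeff α n k := by positivity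
      _ = c k * (k - n / 2) := by ring
  have hc₀ : c 0 = -n := by simp [c, kummerCoeff_zero hα hn]
  have hF₀ : ∑' k, c k * (0 : ℝ) ^ k = -n := by
    rw [tsum_eq_single 0 fun k hk ↦ by simp [zero_pow hk], pow_zero, mul_one, hc₀]
  obtain ⟨m, hm⟩ := exists_nat_gt (n / 2)
  have hcm : 0 < c m := mul_pos (by linarith) (kummerCoeff_pos hα hn m)
  exact exists_unique_pos_root_of_strictMonoOn (w := fun z ↦ z ^ (-(n / 2)))
    (continuous_tsum_mul_pow_of_radius_eq_top hrad) (by linarith)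
    (exists_pos_tsum_mul_pow hs hsign hm hcm) (fun z hz ↦ rpow_pos_of_pos hz _)
    (strictMonoOn_rpow_neg_mul_tsum hs hsign (half_pos hn) (by simpa [hc₀] using hn.ne'))
end

section
/- Fix α > 0 and n > 0, let ψ(y) = Σ_{k=0}^∞ A_k·y^k with A_k = (Γ(α/2)/Γ(n/2)) · Γ(k + n/2) / (Γ(k + α/2) · 2^k · k!), and let Z = Z_{α,n} be the unique positive root of F_{α,n}(z) = Σ_{k=0}^∞ (2k − n)·A_k·z^k. Then for every z ∈ [0, Z], the function g(z) = Z^{n/2}·ψ(z)/ψ(Z) satisfies g(z) ≥ z^{n/2}. -/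
/-!
Put `t = z / Z` and `c k = A k * Z ^ k ≥ 0`. By convexity of `exp`, each power lies above
its tangent line in the exponent at `n / 2`:
`t ^ k ≥ t ^ (n / 2) * (1 + (k - n / 2) * log t)`.
Weighting by `c k` and summing, the first-order term is `(t ^ (n / 2) * log t / 2) * F Z = 0`,
so `ψ z ≥ t ^ (n / 2) * ψ Z`.
-/

open Real
open scoped Nat

theorem rpow_mul_one_add_mul_log_le_pow {t s : ℝ} (ht : 0 ≤ t) (hs : 0 < s) (k : ℕ) :
    t ^ s * (1 + (k - s) * log t) ≤ t ^ k := by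
  rcases ht.eq_or_lt with rfl | ht
  · simp [zero_rpow hs.ne']
  · calc t ^ s * (1 + (k - s) * log t)
        ≤ exp (log t * s) * exp ((k - s) * log t) := by
          rw [rpow_def_of_pos ht]
          gcongr
          linarith [add_one_le_exp ((k - s) * log t)]
      _ = t ^ k := by
          rw [← exp_add, ← rpow_natCast, rpow_def_of_pos ht]
          ring_nf

theorem rpow_mul_tsum_le_tsum_mul_pow {c : ℕ → ℝ} {s t : ℝ} (hc : ∀ k, 0 ≤ c k)
    (ht : 0 ≤ t) (hs : 0 < s) (hsum : Summable c)
    (hsum_sub : Summable fun k : ℕ => (k - s) * c k)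
    (hbal : ∑' k : ℕ, (k - s) * c k = 0) (hsum_pow : Summable fun k => c k * t ^ k) :
    t ^ s * ∑' k, c k ≤ ∑' k, c k * t ^ k := by
  have hS₁ := hsum.mul_left (t ^ s)
  have hS₂ := hsum_sub.mul_left (t ^ s * log t)
  calc t ^ s * ∑' k, c k = ∑' k : ℕ, (t ^ s * c k + t ^ s * log t * ((k - s) * c k)) := by
        rw [hS₁.tsum_add hS₂, tsum_mul_left, tsum_mul_left, hbal, mul_zero, add_zero]
    _ ≤ ∑' k, c k * t ^ k := by
        refine (hS₁.add hS₂).tsum_le_tsum (fun k => ?_) hsum_pow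
        calc t ^ s * c k + t ^ s * log t * ((k - s) * c k)
            = t ^ s * (1 + (k - s) * log t) * c k := by ring
          _ ≤ t ^ k * c k := by
            gcongr
            · exact hc k
            · exact rpow_mul_one_add_mul_log_le_pow ht hs k
          _ = c k * t ^ k := mul_comm _ _

theorem le_pow_div_factorial_of_succ_le {a : ℕ → ℝ} {C : ℝ} (hC : 0 ≤ C)
    (h : ∀ k : ℕ, a (k + 1) ≤ a k * C / (k + 1)) (k : ℕ) :
    a k ≤ a 0 * C ^ k / k ! := by
  induction k with
  | zero => simp
  | succ k ih =>
    calc a (k + 1) ≤ a k * C / (k + 1) := h k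
      _ ≤ a 0 * C ^ k / k ! * C / (k + 1) := by gcongr
      _ = a 0 * C ^ (k + 1) / (k + 1)! := by
        rw [Nat.factorial_succ]
        push_cast
        field_simp
        ring

noncomputable def psiCoeff (α n : ℝ) (k : ℕ) : ℝ :=
  Real.Gamma (α / 2) / Real.Gamma (n / 2) *
    (Real.Gamma ((k : ℝ) + n / 2) /
      (Real.Gamma ((k : ℝ) + α / 2) * 2 ^ k * (Nat.factorial k : ℝ)))

section psiCoeff

variable {α n : ℝ}

theorem psiCoeff_pos (hα : 0 < α) (hn : 0 < n) (k : ℕ) : 0 < psiCoeff α n k := by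
  have := Gamma_pos_of_pos (half_pos hα)
  have := Gamma_pos_of_pos (half_pos hn)
  have := Gamma_pos_of_pos (by positivity : 0 < (k : ℝ) + α / 2)
  have := Gamma_pos_of_pos (by positivity : 0 < (k : ℝ) + n / 2)
  unfold psiCoeff
  positivity

theorem psiCoeff_succ (hα : 0 < α) (hn : 0 < n) (k : ℕ) :
    psiCoeff α n (k + 1) =
      psiCoeff α n k * ((k + n / 2) / ((k + α / 2) * 2 * (k + 1))) := by
  have hn' : (k : ℝ) + n / 2 ≠ 0 := by positivity
  have hα' : (k : ℝ) + α / 2 ≠ 0 := by positivity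
  have hΓ : Gamma ((k : ℝ) + α / 2) ≠ 0 := (Gamma_pos_of_pos (by positivity)).ne'
  unfold psiCoeff
  rw [Nat.cast_succ, add_right_comm _ 1, add_right_comm _ 1, Gamma_add_one hn',
    Gamma_add_one hα', Nat.factorial_succ]
  push_cast
  field_simp
  ring

theorem psiCoeff_le (hα : 0 < α) (hn : 0 < n) (k : ℕ) :
    psiCoeff α n k ≤ psiCoeff α n 0 * ((1 + n / α) / 2) ^ k / k ! := by
  refine le_pow_div_factorial_of_succ_le (by positivity) (fun k => ?_) k
  have hratio : (k + n / 2) / ((k + α / 2) * 2 * (k + 1)) ≤ (1 + n / α) / 2 / (k + 1) := by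
    rw [div_div, div_le_div_iff₀ (by positivity) (by positivity)]
    have : n / α * α = n := div_mul_cancel₀ n hα.ne'
    have : 0 ≤ n / α * k := by positivity
    nlinarith
  rw [psiCoeff_succ hα hn, mul_div_assoc]
  exact mul_le_mul_of_nonneg_left hratio (psiCoeff_pos hα hn k).le

theorem summable_succ_mul_psiCoeff_mul_pow (hα : 0 < α) (hn : 0 < n) {y : ℝ} (hy : 0 ≤ y) :
    Summable fun k : ℕ => (k + 1) * (psiCoeff α n k * y ^ k) := by
  have hA := psiCoeff_pos hα hn
  refine Summable.of_nonneg_of_le (fun k => by have := hA k; positivity) (fun k => ?_)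
    ((summable_pow_div_factorial ((1 + n / α) * y)).mul_left (psiCoeff α n 0))
  have hk : ((k : ℝ) + 1) ≤ 2 ^ k := by exact_mod_cast Nat.lt_two_pow_self
  calc (k + 1) * (psiCoeff α n k * y ^ k)
      ≤ 2 ^ k * (psiCoeff α n 0 * ((1 + n / α) / 2) ^ k / k ! * y ^ k) := by
        have := hA k
        gcongr
        exact psiCoeff_le hα hn k
    _ = psiCoeff α n 0 * (((1 + n / α) * y) ^ k / k !) := by
        rw [div_pow, mul_pow]
        field_simp

theorem summable_sub_mul_psiCoeff_mul_pow (hα : 0 < α) (hn : 0 < n) {y : ℝ} (hy : 0 ≤ y)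
    (s : ℝ) : Summable fun k : ℕ => (k - s) * (psiCoeff α n k * y ^ k) := by
  refine ((summable_succ_mul_psiCoeff_mul_pow hα hn hy).mul_left (1 + |s|)).of_norm_bounded
    (fun k => ?_)
  have hb : 0 ≤ psiCoeff α n k * y ^ k := by have := psiCoeff_pos hα hn k; positivity
  have hks : |(k : ℝ) - s| ≤ (1 + |s|) * (k + 1) := by
    rw [abs_le]
    constructor <;> nlinarith [abs_nonneg s, le_abs_self s, neg_abs_le s, k.cast_nonneg (α := ℝ)]
  rw [norm_mul, norm_of_nonneg hb, norm_eq_abs]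
  exact (mul_le_mul_of_nonneg_right hks hb).trans_eq (mul_assoc _ _ _)

theorem summable_psiCoeff_mul_pow (hα : 0 < α) (hn : 0 < n) {y : ℝ} (hy : 0 ≤ y) :
    Summable fun k : ℕ => psiCoeff α n k * y ^ k := by
  refine (summable_succ_mul_psiCoeff_mul_pow hα hn hy).of_nonneg_of_le
    (fun k => by have := psiCoeff_pos hα hn k; positivity) (fun k => ?_)
  have hb : 0 ≤ psiCoeff α n k * y ^ k := by have := psiCoeff_pos hα hn k; positivity
  nlinarith [k.cast_nonneg (α := ℝ)]

end psiCoeff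

theorem stmt_12_general (α n : ℝ) (hα : 0 < α) (hn : 0 < n) (A : ℕ → ℝ)
    (hA : ∀ k : ℕ,
      A k = Real.Gamma (α / 2) / Real.Gamma (n / 2) *
        (Real.Gamma ((k : ℝ) + n / 2) /
          (Real.Gamma ((k : ℝ) + α / 2) * 2 ^ k * (Nat.factorial k : ℝ))))
    (ψ : ℝ → ℝ) (hψ : ∀ y : ℝ, ψ y = ∑' k : ℕ, A k * y ^ k)
    (F : ℝ → ℝ) (hF : ∀ z : ℝ, F z = ∑' k : ℕ, (2 * (k : ℝ) - n) * A k * z ^ k)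
    (Z : ℝ) (hZpos : 0 < Z) (hZroot : F Z = 0) :
    ∀ z ∈ Set.Icc (0:ℝ) Z, z ^ (n / 2) ≤ Z ^ (n / 2) * ψ z / ψ Z := by
  obtain rfl : A = psiCoeff α n := funext hA
  have hc : ∀ k, 0 ≤ psiCoeff α n k * Z ^ k := fun k => by
    have := psiCoeff_pos hα hn k; positivity
  have hbal : ∑' k : ℕ, (k - n / 2) * (psiCoeff α n k * Z ^ k) = 0 := by
    have : F Z = 2 * ∑' k : ℕ, (k - n / 2) * (psiCoeff α n k * Z ^ k) := by
      rw [hF, ← tsum_mul_left]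
      congr with k
      ring
    linarith
  have hψZ : 0 < ψ Z := by
    rw [hψ]
    exact (summable_psiCoeff_mul_pow hα hn hZpos.le).tsum_pos hc 0
      (by simpa using psiCoeff_pos hα hn 0)
  rintro z ⟨hz, -⟩
  have hterm : ∀ k, psiCoeff α n k * Z ^ k * (z / Z) ^ k = psiCoeff α n k * z ^ k :=
    fun k => by rw [mul_assoc, ← mul_pow, mul_div_cancel₀ z hZpos.ne']
  have key := rpow_mul_tsum_le_tsum_mul_pow hc (div_nonneg hz hZpos.le) (half_pos hn)
    (summable_psiCoeff_mul_pow hα hn hZpos.le)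
    (summable_sub_mul_psiCoeff_mul_pow hα hn hZpos.le _) hbal
    (by simpa only [hterm] using summable_psiCoeff_mul_pow hα hn hz)
  simp only [hterm, ← hψ] at key
  rw [div_rpow hz hZpos.le, div_mul_eq_mul_div, div_le_iff₀ (rpow_pos_of_pos hZpos _)] at key
  rw [le_div_iff₀ hψZ]
  linarith

/-- For `α > 0`, `n > 0`, with `ψ(y) = Σ A_k·y^k` and `Z` the unique positive root of
`F(z) = Σ (2k − n)·A_k·z^k`, the function `g(z) = Z^{n/2}·ψ(z)/ψ(Z)` satisfies
`g(z) ≥ z^{n/2}` for every `z ∈ [0, Z]`. -/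
theorem stmt_12 (α n : ℝ) (hα : 0 < α) (hn : 0 < n) (A : ℕ → ℝ)
    (hA : ∀ k : ℕ,
      A k = Real.Gamma (α / 2) / Real.Gamma (n / 2) *
        (Real.Gamma ((k : ℝ) + n / 2) /
          (Real.Gamma ((k : ℝ) + α / 2) * 2 ^ k * (Nat.factorial k : ℝ))))
    (ψ : ℝ → ℝ) (hψ : ∀ y : ℝ, ψ y = ∑' k : ℕ, A k * y ^ k)
    (F : ℝ → ℝ) (hF : ∀ z : ℝ, F z = ∑' k : ℕ, (2 * (k : ℝ) - n) * A k * z ^ k)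
    (Z : ℝ) (hZpos : 0 < Z) (hZroot : F Z = 0)
    (hZuniq : ∀ z : ℝ, 0 < z → F z = 0 → z = Z) :
    ∀ z ∈ Set.Icc (0:ℝ) Z, z ^ (n / 2) ≤ Z ^ (n / 2) * ψ z / ψ Z :=
  stmt_12_general α n hα hn A hA ψ hψ F hF Z hZpos hZroot
end

section
/- Let α > 2 and n = α − 2. Then both G(y) = y^{−n/2} and H(y) = y^{−n/2} · (1/2)∫₀^y e^{s/2}·s^{n/2 − 1} ds are twice differentiable on (0,∞) and satisfy the ordinary differential equation 4y·u''(y) + 2(α − y)·u'(y) − n·u(y) = 0 for all y > 0. -/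
/-!
Write `p = n / 2`, so that `α = 2p + 2`. For `g(y) = y^{-p}` one has `y g' = -p g` and
`y² g'' = p (p + 1) g`, so the equation for `g` reduces to `4p(p + 1) - 2(2p + 2)p = 0` (the
`y^{-p-1}` terms) and `2p - n = 0` (the `y^{-p}` terms). For `H = g F` with `F' = φ = e^{y/2} y^{p-1} / 2`, the terms
carrying `F` cancel because `g` is a solution (reduction of order), and what remains is
`g · (4y φ' + (4 - 4p - 2y) φ)`, which vanishes since `y φ' = (y/2 + p - 1) φ`.
The integral is such an antiderivative `F` because `s^{p-1}` is integrable at `0` when `p > 0`.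
-/

open Real Filter Topology

/-- Kummer's equation `z w'' + (b - z) w' - a w = 0` in the variable `z = y / 2`, with
`b = α / 2` and `a = n / 2`. -/
def IsKummerSolutionAt (α n : ℝ) (u : ℝ → ℝ) (y : ℝ) : Prop :=
  DifferentiableAt ℝ u y ∧ DifferentiableAt ℝ (deriv u) y ∧
    4 * y * deriv (deriv u) y + 2 * (α - y) * deriv u y - n * u y = 0

theorem isKummerSolutionAt_of_hasDerivAt {α n y u'' : ℝ} {u u' : ℝ → ℝ}
    (hu : ∀ᶠ x in 𝓝 y, HasDerivAt u (u' x) x) (hu' : HasDerivAt u' u'' y)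
    (h : 4 * y * u'' + 2 * (α - y) * u' y - n * u y = 0) : IsKummerSolutionAt α n u y := by
  have hderiv : deriv u =ᶠ[𝓝 y] u' := hu.mono fun x hx => hx.deriv
  refine ⟨hu.self_of_nhds.differentiableAt, hu'.differentiableAt.congr_of_eventuallyEq hderiv, ?_⟩
  rwa [hderiv.deriv_eq, hu'.deriv, hderiv.eq_of_nhds]

theorem isKummerSolutionAt_rpow_neg {α n y : ℝ} (hα : α = n + 2) (hy : 0 < y) :
    IsKummerSolutionAt α n (fun x => x ^ (-(n / 2))) y := by
  refine isKummerSolutionAt_of_hasDerivAt (u' := fun x => -(n / 2) * x ^ (-(n / 2) - 1))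
    ((eventually_gt_nhds hy).mono fun x hx => hasDerivAt_rpow_const (Or.inl hx.ne'))
    ((hasDerivAt_rpow_const (Or.inl hy.ne')).const_mul _) ?_
  simp only [rpow_sub_one hy.ne']
  subst hα
  field_simp
  ring

theorem isKummerSolutionAt_rpow_neg_mul {α n y : ℝ} {F : ℝ → ℝ} (hα : α = n + 2) (hy : 0 < y)
    (hF : ∀ x, 0 < x → HasDerivAt F (1 / 2 * (exp (x / 2) * x ^ (n / 2 - 1))) x) :
    IsKummerSolutionAt α n (fun x => x ^ (-(n / 2)) * F x) y := by
  have hφ : HasDerivAt (fun x => 1 / 2 * (exp (x / 2) * x ^ (n / 2 - 1)))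
      (1 / 2 * (exp (y / 2) * (1 / 2) * y ^ (n / 2 - 1) +
        exp (y / 2) * ((n / 2 - 1) * y ^ (n / 2 - 1 - 1)))) y :=
    ((((hasDerivAt_id y).div_const 2).exp).mul (hasDerivAt_rpow_const (Or.inl hy.ne'))).const_mul _
  refine isKummerSolutionAt_of_hasDerivAt
    (u' := fun x => -(n / 2) * x ^ (-(n / 2) - 1) * F x +
      x ^ (-(n / 2)) * (1 / 2 * (exp (x / 2) * x ^ (n / 2 - 1))))
    ((eventually_gt_nhds hy).mono fun x hx =>
      (hasDerivAt_rpow_const (Or.inl hx.ne')).mul (hF x hx))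
    ((((hasDerivAt_rpow_const (Or.inl hy.ne')).const_mul _).mul (hF y hy)).add
      ((hasDerivAt_rpow_const (Or.inl hy.ne')).mul hφ)) ?_
  simp only [rpow_sub_one hy.ne', rpow_neg hy.le]
  subst hα
  field_simp
  ring

theorem hasDerivAt_integral_exp_half_mul_rpow {r x : ℝ} (hr : -1 < r) (hx : 0 < x) :
    HasDerivAt (fun t => ∫ s in (0 : ℝ)..t, exp (s / 2) * s ^ r) (exp (x / 2) * x ^ r) x := by
  have hint : IntervalIntegrable (fun s => exp (s / 2) * s ^ r) MeasureTheory.volume 0 x :=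
    (intervalIntegral.intervalIntegrable_rpow' hr).continuousOn_mul (by fun_prop)
  have hmeas : Measurable fun s : ℝ => exp (s / 2) * s ^ r := by fun_prop
  have hcont : ContinuousAt (fun s => exp (s / 2) * s ^ r) x :=
    (continuous_exp.comp (continuous_id.div_const 2)).continuousAt.mul
      (continuousAt_rpow_const x r (Or.inl hx.ne'))
  exact intervalIntegral.integral_hasDerivAt_right hint
    hmeas.stronglyMeasurable.stronglyMeasurableAtFilter hcont

/-- For `α > 2` and `n = α − 2`, both `G(y) = y^{−n/2}` and
`H(y) = y^{−n/2}·(1/2)∫₀^y e^{s/2}·s^{n/2−1} ds` are twice differentiable on `(0,∞)` and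
satisfy `4y·u''(y) + 2(α − y)·u'(y) − n·u(y) = 0` for all `y > 0`. -/
theorem stmt_15 (α n : ℝ) (hα : 2 < α) (hn : n = α - 2)
    (G H : ℝ → ℝ)
    (hG : ∀ y : ℝ, G y = y ^ (-(n / 2)))
    (hH : ∀ y : ℝ, H y =
      y ^ (-(n / 2)) * ((1 / 2) * ∫ s in (0:ℝ)..y, Real.exp (s / 2) * s ^ (n / 2 - 1))) :
    ∀ y : ℝ, 0 < y →
      (DifferentiableAt ℝ G y ∧ DifferentiableAt ℝ (deriv G) y ∧
        4 * y * deriv (deriv G) y + 2 * (α - y) * deriv G y - n * G y = 0) ∧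
      (DifferentiableAt ℝ H y ∧ DifferentiableAt ℝ (deriv H) y ∧
        4 * y * deriv (deriv H) y + 2 * (α - y) * deriv H y - n * H y = 0) := by
  intro y hy
  obtain rfl : G = _ := funext hG
  obtain rfl : H = _ := funext hH
  have hα' : α = n + 2 := by linarith
  have hF (x : ℝ) (hx : 0 < x) := (hasDerivAt_integral_exp_half_mul_rpow
    (show -1 < n / 2 - 1 by linarith) hx).const_mul (1 / 2 : ℝ)
  exact ⟨isKummerSolutionAt_rpow_neg hα' hy, isKummerSolutionAt_rpow_neg_mul hα' hy hF⟩
end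

section
/- Fix n > 0 and γ > 0, and define sequences (D_r)_{r≥0}, (B_r)_{r≥0} by D_0 = 1, B_0 = −1, D_{r+1} = (n+γ)·D_r + n·B_r, and B_{r+1} = (n+γ)·D_r + (n + 2r + 2 + 2γ)·B_r. Then for every r ≥ 0 one has D_r ≤ γ^r and B_r ≤ −γ^r·(1 + 2r/γ); moreover, for any r with r > γ²/(2n), it holds that D_{r+1} < 0 and B_{r+1} < 0. -/
open Real

/-!
Induct on the pair of bounds `D r ≤ γ ^ r`, `B r ≤ -γ ^ r (1 + 2r/γ)`. Feeding them into the
recursion gives the sharper `D (r + 1) ≤ γ ^ (r + 1) - 2 n r γ ^ r / γ = γ ^ (r - 1) (γ² - 2 n r)`,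
which is negative as soon as `2 n r > γ²`; negativity of `B (r + 1)` is immediate from its bound.
-/

section Recursion

variable {n γ : ℝ} {D B : ℕ → ℝ}

theorem D_succ_le (hn : 0 ≤ n) (hγ : 0 ≤ γ)
    (hDrec : ∀ r : ℕ, D (r + 1) = (n + γ) * D r + n * B r) {r : ℕ}
    (hD : D r ≤ γ ^ r) (hB : B r ≤ -γ ^ r * (1 + 2 * (r : ℝ) / γ)) :
    D (r + 1) ≤ γ ^ (r + 1) - 2 * n * r * γ ^ r / γ :=
  calc D (r + 1) = (n + γ) * D r + n * B r := hDrec r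
    _ ≤ (n + γ) * γ ^ r + n * (-γ ^ r * (1 + 2 * (r : ℝ) / γ)) := by gcongr
    _ = γ ^ (r + 1) - 2 * n * r * γ ^ r / γ := by ring

theorem B_succ_le (hn : 0 ≤ n) (hγ : 0 < γ)
    (hBrec : ∀ r : ℕ, B (r + 1) = (n + γ) * D r + (n + 2 * (r : ℝ) + 2 + 2 * γ) * B r) {r : ℕ}
    (hD : D r ≤ γ ^ r) (hB : B r ≤ -γ ^ r * (1 + 2 * (r : ℝ) / γ)) :
    B (r + 1) ≤ -γ ^ (r + 1) * (1 + 2 * ((r + 1 : ℕ) : ℝ) / γ) := by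
  have slack : -γ ^ (r + 1) * (1 + 2 * ((r + 1 : ℕ) : ℝ) / γ)
      - ((n + γ) * γ ^ r + (n + 2 * (r : ℝ) + 2 + 2 * γ) * (-γ ^ r * (1 + 2 * (r : ℝ) / γ)))
      = 4 * r * γ ^ r + 2 * r * (n + 2 * r + 2) * γ ^ r / γ := by
    push_cast
    field_simp
    ring
  calc B (r + 1) = (n + γ) * D r + (n + 2 * (r : ℝ) + 2 + 2 * γ) * B r := hBrec r
    _ ≤ (n + γ) * γ ^ r + (n + 2 * (r : ℝ) + 2 + 2 * γ) * (-γ ^ r * (1 + 2 * (r : ℝ) / γ)) := by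
      gcongr
    _ ≤ -γ ^ (r + 1) * (1 + 2 * ((r + 1 : ℕ) : ℝ) / γ) := by
      have : 0 ≤ 4 * r * γ ^ r + 2 * r * (n + 2 * r + 2) * γ ^ r / γ := by positivity
      linarith

theorem D_le_and_B_le (hn : 0 ≤ n) (hγ : 0 < γ) (hD0 : D 0 = 1) (hB0 : B 0 = -1)
    (hDrec : ∀ r : ℕ, D (r + 1) = (n + γ) * D r + n * B r)
    (hBrec : ∀ r : ℕ, B (r + 1) = (n + γ) * D r + (n + 2 * (r : ℝ) + 2 + 2 * γ) * B r)
    (r : ℕ) : D r ≤ γ ^ r ∧ B r ≤ -γ ^ r * (1 + 2 * (r : ℝ) / γ) := by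
  induction r with
  | zero => simp [hD0, hB0]
  | succ r ih =>
    obtain ⟨hD, hB⟩ := ih
    refine ⟨?_, B_succ_le hn hγ hBrec hD hB⟩
    have : 0 ≤ 2 * n * r * γ ^ r / γ := by positivity
    linarith [D_succ_le hn hγ.le hDrec hD hB]

theorem D_succ_neg (hn : 0 < n) (hγ : 0 < γ)
    (hDrec : ∀ r : ℕ, D (r + 1) = (n + γ) * D r + n * B r) {r : ℕ}
    (hD : D r ≤ γ ^ r) (hB : B r ≤ -γ ^ r * (1 + 2 * (r : ℝ) / γ))
    (hr : γ ^ 2 / (2 * n) < r) : D (r + 1) < 0 := by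
  have hγr : γ ^ 2 < 2 * n * r := by
    rw [div_lt_iff₀ (by positivity)] at hr
    linarith
  have factor : γ ^ (r + 1) - 2 * n * r * γ ^ r / γ = γ ^ r / γ * (γ ^ 2 - 2 * n * r) := by
    field_simp
    ring
  calc D (r + 1) ≤ γ ^ r / γ * (γ ^ 2 - 2 * n * r) := factor ▸ D_succ_le hn.le hγ.le hDrec hD hB
    _ < 0 := mul_neg_of_pos_of_neg (by positivity) (by linarith)

end Recursion

/-- For `n > 0`, `γ > 0` and the sequences `D₀ = 1`, `B₀ = −1`,
`D_{r+1} = (n+γ)·D_r + n·B_r`, `B_{r+1} = (n+γ)·D_r + (n+2r+2+2γ)·B_r`, one has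
`D_r ≤ γ^r` and `B_r ≤ −γ^r·(1 + 2r/γ)` for every `r`; moreover, for any `r > γ²/(2n)`,
`D_{r+1} < 0` and `B_{r+1} < 0`. -/
theorem stmt_17 (n γ : ℝ) (hn : 0 < n) (hγ : 0 < γ)
    (D B : ℕ → ℝ) (hD0 : D 0 = 1) (hB0 : B 0 = -1)
    (hDrec : ∀ r : ℕ, D (r + 1) = (n + γ) * D r + n * B r)
    (hBrec : ∀ r : ℕ, B (r + 1) = (n + γ) * D r + (n + 2 * (r : ℝ) + 2 + 2 * γ) * B r) :
    (∀ r : ℕ, D r ≤ γ ^ r ∧ B r ≤ -γ ^ r * (1 + 2 * (r : ℝ) / γ)) ∧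
      ∀ r : ℕ, γ ^ 2 / (2 * n) < (r : ℝ) → D (r + 1) < 0 ∧ B (r + 1) < 0 := by
  have bounds := D_le_and_B_le hn.le hγ hD0 hB0 hDrec hBrec
  refine ⟨bounds, fun r hr => ⟨D_succ_neg hn hγ hDrec (bounds r).1 (bounds r).2 hr, ?_⟩⟩
  calc B (r + 1) ≤ -γ ^ (r + 1) * (1 + 2 * ((r + 1 : ℕ) : ℝ) / γ) := (bounds (r + 1)).2
    _ < 0 := by
      have : 0 < γ ^ (r + 1) * (1 + 2 * ((r + 1 : ℕ) : ℝ) / γ) := by positivity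
      linarith
end

section
/- Fix δ > 0 and α > 0. Define real sequences by d_0 = 1, b_0 = −1, d_{r+1} = δ·d_r + 2(1+δ)·b_r, b_{r+1} = δ·d_r + 2r·b_r, and D_0 = 1, B_0 = −1, D_{r+1} = (α+δ)·D_r + (α + 2 + 2δ)·B_r, B_{r+1} = (α+δ)·D_r + (2r + α)·B_r. Then for every r ≥ 0 one has D_r ≤ d_r and B_r ≤ b_r. -/
/-!
Only the sign of `d r + b r` matters: the differences `D - d` and `B - b` satisfy the recursion
of `(d, b)` with the forcing term `α (D + B)`, and `D + B ≤ d + b` as long as the differences are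
nonpositive, so `d + b ≤ 0` keeps them nonpositive.

For the unperturbed pair, `d (r+1) + b (r+1)` is twice `I r := δ (d r + b r) + (r + 1) b r`, and
`I (r+1) = δ (r + 2 + 2δ) (d r + b r) + r (2r + 4 + δ) b r`. This is nonpositive when `b r ≤ 0`,
and for `r ≤ δ + 1` so is `(r + 1) I (r+1) = r (2r + 4 + δ) I r + δ (r + 2) (δ + 1 - r) (d r + b r)`.
Since also `b (r+1) = I r + (r - 1 - δ) b r = δ (d r + b r) + (2r - δ) b r`, the three conditions
`d r + b r ≤ 0`, `I r ≤ 0` and `δ + 1 < r → b r ≤ 0` propagate together.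
-/

section Unperturbed

variable {δ : ℝ} {d b : ℕ → ℝ}

def UnperturbedInvariant (δ : ℝ) (d b : ℕ → ℝ) (r : ℕ) : Prop :=
  d r + b r ≤ 0 ∧ δ * (d r + b r) + ((r : ℝ) + 1) * b r ≤ 0 ∧ (δ + 1 < r → b r ≤ 0)

theorem unperturbedInvariant_succ (hδ : 0 ≤ δ)
    (hdrec : ∀ r : ℕ, d (r + 1) = δ * d r + 2 * (1 + δ) * b r)
    (hbrec : ∀ r : ℕ, b (r + 1) = δ * d r + 2 * (r : ℝ) * b r) {r : ℕ}
    (h : UnperturbedInvariant δ d b r) : UnperturbedInvariant δ d b (r + 1) := by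
  obtain ⟨hs, hI, hb⟩ := h
  have hr : (0 : ℝ) ≤ r := r.cast_nonneg
  unfold UnperturbedInvariant
  rw [hdrec, hbrec]
  push_cast
  refine ⟨by linarith, ?_, fun hδr => ?_⟩
  · rcases le_or_gt (r : ℝ) (δ + 1) with hrδ | hrδ
    · have hrδ' : 0 ≤ δ + 1 - r := by linarith
      have key : ((r : ℝ) + 1) * (δ * (δ * d r + 2 * (1 + δ) * b r + (δ * d r + 2 * r * b r))
            + ((r : ℝ) + 1 + 1) * (δ * d r + 2 * r * b r))
          = r * (2 * r + 4 + δ) * (δ * (d r + b r) + ((r : ℝ) + 1) * b r)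
            + δ * (r + 2) * (δ + 1 - r) * (d r + b r) := by ring
      refine nonpos_of_mul_nonpos_right (a := (r : ℝ) + 1) ?_ (by linarith)
      rw [key]
      exact add_nonpos (mul_nonpos_of_nonneg_of_nonpos (by positivity) hI)
        (mul_nonpos_of_nonneg_of_nonpos (by positivity) hs)
    · linear_combination
        mul_nonpos_of_nonneg_of_nonpos (by positivity : (0 : ℝ) ≤ δ * (r + 2 + 2 * δ)) hs
        + mul_nonpos_of_nonneg_of_nonpos (by positivity : (0 : ℝ) ≤ r * (2 * r + 4 + δ)) (hb hrδ)
  · rcases le_or_gt (b r) 0 with hbr | hbr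
    · linear_combination mul_nonpos_of_nonneg_of_nonpos hδ hs
        + mul_nonpos_of_nonneg_of_nonpos (by linarith : (0 : ℝ) ≤ 2 * r - δ) hbr
    · have hrδ : (r : ℝ) ≤ δ + 1 := not_lt.1 fun h => hbr.not_ge (hb h)
      linear_combination hI
        + mul_nonpos_of_nonpos_of_nonneg (by linarith : (r : ℝ) - 1 - δ ≤ 0) hbr.le

theorem unperturbedInvariant_of_recurrence (hδ : 0 ≤ δ) (hd0 : d 0 = 1) (hb0 : b 0 = -1)
    (hdrec : ∀ r : ℕ, d (r + 1) = δ * d r + 2 * (1 + δ) * b r)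
    (hbrec : ∀ r : ℕ, b (r + 1) = δ * d r + 2 * (r : ℝ) * b r) (r : ℕ) :
    UnperturbedInvariant δ d b r := by
  induction r with
  | zero =>
    refine ⟨?_, ?_, fun h => ?_⟩ <;> simp only [hd0, hb0, Nat.cast_zero] at * <;> linarith
  | succ r ih => exact unperturbedInvariant_succ hδ hdrec hbrec ih

end Unperturbed

theorem le_and_le_of_add_nonpos {δ α : ℝ} {d b D B : ℕ → ℝ} (hδ : 0 ≤ δ) (hα : 0 ≤ α)
    (hdrec : ∀ r : ℕ, d (r + 1) = δ * d r + 2 * (1 + δ) * b r)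
    (hbrec : ∀ r : ℕ, b (r + 1) = δ * d r + 2 * (r : ℝ) * b r)
    (hDrec : ∀ r : ℕ, D (r + 1) = (α + δ) * D r + (α + 2 + 2 * δ) * B r)
    (hBrec : ∀ r : ℕ, B (r + 1) = (α + δ) * D r + (2 * (r : ℝ) + α) * B r)
    (hsum : ∀ r, d r + b r ≤ 0) (hD0 : D 0 ≤ d 0) (hB0 : B 0 ≤ b 0) :
    ∀ r, D r ≤ d r ∧ B r ≤ b r := by
  intro r
  induction r with
  | zero => exact ⟨hD0, hB0⟩
  | succ r ih =>
    obtain ⟨hD, hB⟩ := ih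
    have hDd : 0 ≤ δ * (d r - D r) := mul_nonneg hδ (sub_nonneg.2 hD)
    have hDB : 0 ≤ α * -(D r + B r) := mul_nonneg hα (by linarith [hsum r])
    have hBb : 0 ≤ b r - B r := sub_nonneg.2 hB
    constructor
    · rw [hDrec, hdrec]
      linear_combination hDd + hDB + mul_nonneg (by linarith : (0 : ℝ) ≤ 2 * (1 + δ)) hBb
    · rw [hBrec, hbrec]
      linear_combination hDd + hDB + mul_nonneg (by positivity : (0 : ℝ) ≤ 2 * (r : ℝ)) hBb

/-- For `δ > 0`, `α > 0`, with `d₀ = 1`, `b₀ = −1`, `d_{r+1} = δ·d_r + 2(1+δ)·b_r`,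
`b_{r+1} = δ·d_r + 2r·b_r`, and `D₀ = 1`, `B₀ = −1`,
`D_{r+1} = (α+δ)·D_r + (α+2+2δ)·B_r`, `B_{r+1} = (α+δ)·D_r + (2r+α)·B_r`,
one has `D_r ≤ d_r` and `B_r ≤ b_r` for every `r`. -/
theorem stmt_19 (δ α : ℝ) (hδ : 0 < δ) (hα : 0 < α)
    (d b D B : ℕ → ℝ) (hd0 : d 0 = 1) (hb0 : b 0 = -1)
    (hdrec : ∀ r : ℕ, d (r + 1) = δ * d r + 2 * (1 + δ) * b r)
    (hbrec : ∀ r : ℕ, b (r + 1) = δ * d r + 2 * (r : ℝ) * b r)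
    (hD0 : D 0 = 1) (hB0 : B 0 = -1)
    (hDrec : ∀ r : ℕ, D (r + 1) = (α + δ) * D r + (α + 2 + 2 * δ) * B r)
    (hBrec : ∀ r : ℕ, B (r + 1) = (α + δ) * D r + (2 * (r : ℝ) + α) * B r) :
    ∀ r : ℕ, D r ≤ d r ∧ B r ≤ b r :=
  le_and_le_of_add_nonpos hδ.le hα.le hdrec hbrec hDrec hBrec
    (fun r => (unperturbedInvariant_of_recurrence hδ.le hd0 hb0 hdrec hbrec r).1)
    (by rw [hD0, hd0]) (by rw [hB0, hb0])
end
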